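/- arXiv:1102.3105 — 3 statements merged into one kernel-verified Lean document; each statement's English description precedes it below -/
import Mathlib

section
/- Let n ≥ 0 be an integer and let a_0, …, a_n be positive integers. Assume that for every index k ∈ {0, …, n} with a_k ≥ 2 and every integer j with 1 ≤ j ≤ a_k − 1 one has ∑_{i=0}^{n} ((j·a_i) mod a_k) ≥ a_k. Then for every nonempty subset S ⊆ {0, …, n} whose highest common factor h := gcd{a_i : i ∈ S} satisfies h ≥ 2, and for every integer j with 1 ≤ j ≤ h − 1, one has ∑_{i=0}^{n} ((j·a_i) mod h) ≥ h. -/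
/-- If Reid's criterion sums hold at every coordinate point
(i.e. for every single weight `a k ≥ 2`), then they hold for every nonempty
subset `S` of the indices whose gcd of weights is at least 2. -/
theorem stmt_0 (n : ℕ) (a : Fin (n + 1) → ℕ) (ha : ∀ i, 0 < a i)
    (hcoord : ∀ k : Fin (n + 1), 2 ≤ a k →
      ∀ j : ℕ, 1 ≤ j → j ≤ a k - 1 → a k ≤ ∑ i, (j * a i) % (a k)) :
    ∀ S : Finset (Fin (n + 1)), S.Nonempty → 2 ≤ S.gcd a →
      ∀ j : ℕ, 1 ≤ j → j ≤ S.gcd a - 1 → S.gcd a ≤ ∑ i, (j * a i) % (S.gcd a) := by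
  intro S hS hgcd j hj1 hj2
  obtain ⟨k, hk⟩ := hS
  set h := S.gcd a with hh
  have hdvd : h ∣ a k := Finset.gcd_dvd hk
  obtain ⟨m, hm⟩ := hdvd
  have hm0 : 0 < m := by
    rcases Nat.eq_zero_or_pos m with h0 | h0
    · rw [h0, mul_zero] at hm; exact absurd hm (ha k).ne'
    · exact h0
  have hak2 : 2 ≤ a k := by
    have : h ≤ a k := Nat.le_of_dvd (ha k) ⟨m, hm⟩
    omega
  have key := hcoord k hak2 (j * m) (Nat.mul_pos hj1 hm0)
    (by
      have : j * m ≤ (h - 1) * m := Nat.mul_le_mul_right m hj2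
      have h2 : (h - 1) * m = h * m - m := by
        rw [Nat.sub_mul, one_mul]
      omega)
  rw [hm] at key
  have heq : ∀ i, (j * m * a i) % (h * m) = m * ((j * a i) % h) := by
    intro i
    rw [show j * m * a i = m * (j * a i) by ring, show h * m = m * h by ring,
      Nat.mul_mod_mul_left]
  rw [Finset.sum_congr rfl (fun i _ => heq i), ← Finset.mul_sum] at key
  calc h = h * m / m := by rw [Nat.mul_div_cancel _ hm0]
    _ ≤ m * (∑ i, (j * a i) % h) / m := Nat.div_le_div_right key
    _ = ∑ i, (j * a i) % h := by rw [Nat.mul_div_cancel_left _ hm0]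
end

section
/- For every integer k ≥ 2 and every integer i with 1 ≤ i ≤ k·(k+1) − 1, one has (k+2)·((i·k) mod (k·(k+1))) + (2k−1)·((i·(k+1)) mod (k·(k+1))) ≥ k·(k+1). -/
/-- For every integer `k ≥ 2` and every `1 ≤ i ≤ k(k+1) - 1`,
`(k+2) * ((i*k) mod (k(k+1))) + (2k-1) * ((i*(k+1)) mod (k(k+1))) ≥ k(k+1)`. -/
theorem stmt_5 (k i : ℕ) (hk : 2 ≤ k) (hi1 : 1 ≤ i) (hi2 : i ≤ k * (k + 1) - 1) :
    k * (k + 1) ≤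
      (k + 2) * ((i * k) % (k * (k + 1))) + (2 * k - 1) * ((i * (k + 1)) % (k * (k + 1))) := by
  have h1 : (i * k) % (k * (k + 1)) = k * (i % (k + 1)) := by
    rw [mul_comm i k, Nat.mul_mod_mul_left]
  have h2 : (i * (k + 1)) % (k * (k + 1)) = (k + 1) * (i % k) := by
    rw [mul_comm i (k + 1), mul_comm k (k + 1), Nat.mul_mod_mul_left]
  rw [h1, h2]
  by_cases hb : i % k = 0
  · have ha : i % (k + 1) ≠ 0 := by
      intro ha
      have hdk : k ∣ i := Nat.dvd_of_mod_eq_zero hb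
      have hdk1 : (k + 1) ∣ i := Nat.dvd_of_mod_eq_zero ha
      have hcop : Nat.Coprime k (k + 1) := Nat.coprime_self_add_right.mpr (Nat.coprime_one_right k)
      have hdvd : k * (k + 1) ∣ i := hcop.mul_dvd_of_dvd_of_dvd hdk hdk1
      have hle : k * (k + 1) ≤ i := Nat.le_of_dvd (by omega) hdvd
      omega
    have ha1 : 1 ≤ i % (k + 1) := Nat.one_le_iff_ne_zero.mpr ha
    rw [hb]
    simp only [mul_zero, Nat.mul_zero, Nat.add_zero]
    calc k * (k + 1) ≤ (k + 2) * (k * 1) := by nlinarith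
      _ ≤ (k + 2) * (k * (i % (k + 1))) := by gcongr
  · have hb1 : 1 ≤ i % k := Nat.one_le_iff_ne_zero.mpr hb
    obtain ⟨c, hc⟩ : ∃ c, 2 * k - 1 = (k + 1) + c := ⟨k - 2, by omega⟩
    rw [hc]
    calc k * (k + 1) ≤ (k + 1 + c) * ((k + 1) * 1) := by nlinarith
      _ ≤ (k + 1 + c) * ((k + 1) * (i % k)) := by gcongr
      _ ≤ _ := Nat.le_add_left _ _
end

section
/- Let k ≥ 2 and 0 ≤ l ≤ 2 be integers and set n := 3k + l − 1. Then, in the rational numbers, (l+3) / (k^{k+1+l} · (k+1)^{2k−2+l}) < 3^{n+1} / (n−1)^{n}. -/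
lemma key0 (a : ℕ) :
    3 * (3*a+4)^(3*a+5) < 3^(3*a+6) * ((a+2)^(a+3) * (a+3)^(2*a+2)) := by
  calc 3 * (3*a+4)^(3*a+5)
      ≤ 3 * (3*(a+2))^(3*a+5) := by gcongr <;> omega
    _ = 3^(3*a+6) * ((a+2)^(a+3) * (a+2)^(2*a+2)) := by rw [mul_pow]; ring
    _ < 3^(3*a+6) * ((a+2)^(a+3) * (a+3)^(2*a+2)) := by gcongr <;> omega

lemma key1 (a : ℕ) :
    4 * (3*a+5)^(3*a+6) < 3^(3*a+7) * ((a+2)^(a+4) * (a+3)^(2*a+3)) := by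
  calc 4 * (3*a+5)^(3*a+6)
      ≤ 4 * (3*(a+2))^(3*a+6) := by gcongr <;> omega
    _ = 4 * 3^(3*a+6) * ((a+2)^(a+4) * (a+2)^(2*a+2)) := by rw [mul_pow]; ring
    _ < 9 * 3^(3*a+6) * ((a+2)^(a+4) * (a+3)^(2*a+2)) := by gcongr <;> omega
    _ ≤ 3*(a+3) * 3^(3*a+6) * ((a+2)^(a+4) * (a+3)^(2*a+2)) := by gcongr <;> omega
    _ = 3^(3*a+7) * ((a+2)^(a+4) * (a+3)^(2*a+3)) := by ring

lemma key2 (a : ℕ) :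
    5 * (3*a+6)^(3*a+7) < 3^(3*a+8) * ((a+2)^(a+5) * (a+3)^(2*a+4)) := by
  calc 5 * (3*a+6)^(3*a+7)
      = 5 * (3*(a+2))^(3*a+7) := by ring_nf
    _ = 5 * 3^(3*a+7) * ((a+2)^(a+5) * (a+2)^(2*a+2)) := by rw [mul_pow]; ring
    _ < 27 * 3^(3*a+7) * ((a+2)^(a+5) * (a+3)^(2*a+2)) := by gcongr <;> omega
    _ ≤ 3*(a+3)*(a+3) * 3^(3*a+7) * ((a+2)^(a+5) * (a+3)^(2*a+2)) := by
        gcongr <;> nlinarith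
    _ = 3^(3*a+8) * ((a+2)^(a+5) * (a+3)^(2*a+4)) := by ring

/-- For integers `k ≥ 2`, `0 ≤ l ≤ 2` and `n = 3k + l - 1`, in `ℚ`:
`(l+3) / (k^(k+1+l)·(k+1)^(2k-2+l)) < 3^(n+1) / (n-1)^n`. -/
theorem stmt_7 (k l n : ℕ) (hk : 2 ≤ k) (hl : l ≤ 2) (hn : n = 3 * k + l - 1) :
    ((l : ℚ) + 3) / ((k : ℚ) ^ (k + 1 + l) * ((k : ℚ) + 1) ^ (2 * k - 2 + l)) <
      (3 : ℚ) ^ (n + 1) / ((n : ℚ) - 1) ^ n := by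
  obtain ⟨a, rfl⟩ : ∃ a, k = a + 2 := ⟨k - 2, by omega⟩
  interval_cases l
  · have hn' : n = 3*a+5 := by omega
    subst hn'
    have key : ((3 * (3*a+4)^(3*a+5) : ℕ) : ℚ) < ((3^(3*a+6) * ((a+2)^(a+3) * (a+3)^(2*a+2)) : ℕ) : ℚ) :=
      by exact_mod_cast key0 a
    push_cast at key
    rw [div_lt_div_iff₀ (by positivity) (by push_cast; ring_nf; positivity)]
    push_cast
    rw [show 2*(a+2)-2 = 2*a+2 from by omega, show a+2+1 = a+3 from by omega]
    push_cast
    calc ((0:ℚ) + 3) * ((3*(a:ℚ)+5) - 1) ^ (3*a+5) = 3 * ((3*(a:ℚ)+4))^(3*a+5) := by ring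
      _ < 3^(3*a+6) * ((a+2:ℚ)^(a+3) * ((a+3:ℚ))^(2*a+2)) := by exact_mod_cast key
      _ = 3 ^ (3*a+5+1) * (((a:ℚ)+2) ^ (a+3) * ((a:ℚ)+2+1) ^ (2*a+2)) := by push_cast; ring
  · have hn' : n = 3*a+6 := by omega
    subst hn'
    have key : ((4 * (3*a+5)^(3*a+6) : ℕ) : ℚ) < ((3^(3*a+7) * ((a+2)^(a+4) * (a+3)^(2*a+3)) : ℕ) : ℚ) :=
      by exact_mod_cast key1 a
    push_cast at key
    rw [div_lt_div_iff₀ (by positivity) (by push_cast; ring_nf; positivity)]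
    push_cast
    rw [show 2*(a+2)-2+1 = 2*a+3 from by omega, show a+2+1+1 = a+4 from by omega]
    calc ((1:ℚ) + 3) * ((3*(a:ℚ)+6) - 1) ^ (3*a+6) = 4 * ((3*(a:ℚ)+5))^(3*a+6) := by ring
      _ < 3^(3*a+7) * ((a+2:ℚ)^(a+4) * ((a+3:ℚ))^(2*a+3)) := by exact_mod_cast key
      _ = 3 ^ (3*a+6+1) * (((a:ℚ)+2) ^ (a+4) * ((a:ℚ)+2+1) ^ (2*a+3)) := by ring
  · have hn' : n = 3*a+7 := by omega
    subst hn'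
    have key : ((5 * (3*a+6)^(3*a+7) : ℕ) : ℚ) < ((3^(3*a+8) * ((a+2)^(a+5) * (a+3)^(2*a+4)) : ℕ) : ℚ) :=
      by exact_mod_cast key2 a
    push_cast at key
    rw [div_lt_div_iff₀ (by positivity) (by push_cast; ring_nf; positivity)]
    push_cast
    rw [show 2*(a+2)-2+2 = 2*a+4 from by omega, show a+2+1+2 = a+5 from by omega]
    calc ((2:ℚ) + 3) * ((3*(a:ℚ)+7) - 1) ^ (3*a+7) = 5 * ((3*(a:ℚ)+6))^(3*a+7) := by ring
      _ < 3^(3*a+8) * ((a+2:ℚ)^(a+5) * ((a+3:ℚ))^(2*a+4)) := by exact_mod_cast key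
      _ = 3 ^ (3*a+7+1) * (((a:ℚ)+2) ^ (a+5) * ((a:ℚ)+2+1) ^ (2*a+4)) := by ring
end
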